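/- Let n be a natural number and let G be a closed connected solvable subgroup of GL(n, ℝ). Suppose that the continuous irreducible finite-dimensional complex representations of G separate its points, i.e., for every g ∈ G with g ≠ 1 there exist m and a continuous irreducible representation ρ : G → GL(m, ℂ) with ρ(g) ≠ 1. Then G is commutative. -/

import Mathlib

open Matrix
open scoped commutatorElement

lemma const_of_finite {X : Type*} [TopologicalSpace X] [PreconnectedSpace X]
    {f : X → ℂ} (hf : Continuous f) {S : Set ℂ} (hS : S.Finite) (hfS : ∀ x, f x ∈ S)
    (x y : X) : f x = f y := by
  set U : Set X := f ⁻¹' {f x} with hU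
  have hUc : IsClosed U := IsClosed.preimage hf isClosed_singleton
  have hUo : IsOpen U := by
    have : Uᶜ = f ⁻¹' (S \ {f x}) := by
      ext z
      simp only [Set.mem_compl_iff, hU, Set.mem_preimage, Set.mem_singleton_iff,
        Set.mem_diff]
      exact ⟨fun h => ⟨hfS z, h⟩, fun h => h.2⟩
    have : IsClosed Uᶜ := by
      rw [this]
      exact IsClosed.preimage hf ((hS.subset Set.diff_subset).isClosed)
    simpa using this.isOpen_compl
  have : U = Set.univ := IsClopen.eq_univ ⟨hUc, hUo⟩ ⟨x, rfl⟩
  have hy : y ∈ U := this ▸ Set.mem_univ y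
  exact (hy : f y = f x).symm

lemma commuting_common_eigenvector :
    ∀ (N : ℕ) (V : Type) [AddCommGroup V] [Module ℂ V] [FiniteDimensional ℂ V]
    [Nontrivial V], Module.finrank ℂ V ≤ N →
    ∀ (S : Set (Module.End ℂ V)), (∀ f ∈ S, ∀ g ∈ S, Commute f g) →
    ∃ v : V, v ≠ 0 ∧ ∀ f ∈ S, ∃ c : ℂ, f v = c • v := by
  intro N
  induction N with
  | zero =>
    intro V _ _ _ _ hr
    have : 0 < Module.finrank ℂ V := Module.finrank_pos
    omega
  | succ N ih =>
    intro V _ _ _ _ hr S hS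
    by_cases hsc : ∀ f ∈ S, ∃ c : ℂ, f = c • (LinearMap.id : V →ₗ[ℂ] V)
    · obtain ⟨v, hv⟩ := exists_ne (0 : V)
      exact ⟨v, hv, fun f hf => by
        obtain ⟨c, hc⟩ := hsc f hf
        exact ⟨c, by rw [hc]; rfl⟩⟩
    · push_neg at hsc
      obtain ⟨f0, hf0S, hf0⟩ := hsc
      obtain ⟨μ, hμ⟩ := Module.End.exists_eigenvalue f0
      set E := Module.End.eigenspace f0 μ with hE
      have hEne : E ≠ ⊥ := hμ
      have hEnetop : E ≠ ⊤ := by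
        intro h
        apply hf0 μ
        ext v
        have : v ∈ E := h ▸ Submodule.mem_top
        simpa using Module.End.mem_eigenspace_iff.mp this
      have hElt : Module.finrank ℂ E < Module.finrank ℂ V :=
        Submodule.finrank_lt hEnetop
      have hmapsto : ∀ g ∈ S, ∀ v ∈ E, g v ∈ E := by
        intro g hg v hv
        rw [hE, Module.End.mem_eigenspace_iff] at hv ⊢
        have hcomm := hS f0 hf0S g hg
        calc f0 (g v) = g (f0 v) := by
              have := congrArg (fun h : Module.End ℂ V => h v) hcomm
              simpa using this
          _ = μ • g v := by rw [hv]; exact g.map_smul μ v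
      have : Nontrivial E := Submodule.nontrivial_iff_ne_bot.mpr hEne
      set S' : Set (Module.End ℂ E) :=
        {h | ∃ g ∈ S, ∃ (hg : ∀ v ∈ E, g v ∈ E), h = LinearMap.restrict g hg} with hS'
      have hS'comm : ∀ a ∈ S', ∀ b ∈ S', Commute a b := by
        rintro a ⟨g, hg, hgE, rfl⟩ b ⟨g', hg', hg'E, rfl⟩
        have := hS g hg g' hg'
        ext v
        have h1 : g (g' v) = g' (g v) := by
          have := congrArg (fun h : Module.End ℂ V => h (v : V)) this
          simpa using this
        simp only [Module.End.mul_apply, LinearMap.restrict_coe_apply]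
        exact h1
      obtain ⟨v, hv0, hv⟩ := ih E (by omega) S' hS'comm
      refine ⟨(v : V), by simpa using hv0, fun g hg => ?_⟩
      obtain ⟨c, hc⟩ := hv (LinearMap.restrict g (hmapsto g hg)) ⟨g, hg, hmapsto g hg, rfl⟩
      refine ⟨c, ?_⟩
      have := congrArg (Subtype.val) hc
      simpa [LinearMap.restrict_apply] using this


section Conn
variable {G : Type*} [Group G] [TopologicalSpace G] [IsTopologicalGroup G]

/-- ordered product of commutators, as continuous image -/
private def commProd (n : ℕ) (f : Fin n → G × G) : G :=
  (List.ofFn (fun i => ⁅(f i).1, (f i).2⁆)).prod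

private lemma continuous_commProd (n : ℕ) : Continuous (commProd (G := G) n) := by
  induction n with
  | zero =>
    exact (continuous_const (y := (1 : G))).congr (fun f => by simp [commProd])
  | succ n ih =>
    have : (commProd (G := G) (n+1)) = fun f =>
        ⁅(f 0).1, (f 0).2⁆ * commProd n (fun i => f i.succ) := by
      funext f
      simp [commProd, List.ofFn_succ]
    rw [this]
    have h1 : Continuous fun f : Fin (n+1) → G × G => ⁅(f 0).1, (f 0).2⁆ := by
      have hf0 : Continuous fun f : Fin (n+1) → G × G => f 0 := continuous_apply 0
      have ha : Continuous fun f : Fin (n+1) → G × G => (f 0).1 := continuous_fst.comp hf0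
      have hb : Continuous fun f : Fin (n+1) → G × G => (f 0).2 := continuous_snd.comp hf0
      exact ((ha.mul hb).mul (ha.inv)).mul (hb.inv)
    have h2 : Continuous fun f : Fin (n+1) → G × G => commProd n (fun i => f i.succ) := by
      refine ih.comp ?_
      exact continuous_pi fun i => continuous_apply (i.succ)
    exact h1.mul h2

lemma isPreconnected_commutator [PreconnectedSpace G] :
    IsPreconnected ((commutator G : Subgroup G) : Set G) := by
  have hA : ∀ n : ℕ, IsPreconnected (Set.range (commProd (G := G) n)) := by
    intro n
    have : ConnectedSpace G := { toNonempty := ⟨1⟩ }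
    exact isPreconnected_range (continuous_commProd n)
  have hsub : ∀ n, Set.range (commProd (G := G) n) ⊆ (commutator G : Subgroup G) := by
    rintro n x ⟨f, rfl⟩
    refine Subgroup.list_prod_mem _ ?_
    intro y hy
    rw [List.mem_ofFn] at hy
    obtain ⟨i, rfl⟩ := hy
    exact Subgroup.commutator_mem_commutator (Subgroup.mem_top _) (Subgroup.mem_top _)
  have hone : ∀ n, (1 : G) ∈ Set.range (commProd (G := G) n) := by
    intro n
    refine ⟨fun _ => (1, 1), ?_⟩
    simp [commProd]
  apply isPreconnected_of_forall (1 : G)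
  · intro y hy
    -- y is a product of commutators
    have hy' : y ∈ Subgroup.closure (commutatorSet G) := by
      rwa [← commutator_eq_closure]
    have hy'' : y ∈ Submonoid.closure (commutatorSet G ∪ (commutatorSet G)⁻¹) := by
      rw [← Subgroup.closure_toSubmonoid]
      exact hy'
    have hset : commutatorSet G ∪ (commutatorSet G)⁻¹ = commutatorSet G := by
      apply Set.union_eq_self_of_subset_right
      rintro x ⟨a, b, hab⟩
      exact ⟨b, a, by rw [← commutatorElement_inv, hab, inv_inv]⟩
    rw [hset] at hy''
    obtain ⟨l, hl, rfl⟩ := Submonoid.exists_list_of_mem_closure hy''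
    refine ⟨Set.range (commProd (G := G) l.length), hsub _, hone _, ?_, hA _⟩
    have : ∀ i : Fin l.length, ∃ p : G × G, ⁅p.1, p.2⁆ = l.get i := by
      intro i
      obtain ⟨a, b, hab⟩ := hl (l.get i) (by simpa using List.get_mem l i.1 i.2)
      exact ⟨(a, b), hab⟩
    choose f hf using this
    refine ⟨f, ?_⟩
    simp only [commProd]
    have h2 : (List.ofFn fun i => ⁅(f i).1, (f i).2⁆) = List.ofFn l.get := by
      congr 1
      funext i
      exact hf i
    rw [h2, List.ofFn_get]
end Conn

lemma derivedSeries_commutator_le (G : Type*) [Group G] (k : ℕ) :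
    (derivedSeries (↥(commutator G)) k).map (commutator G).subtype ≤ derivedSeries G (k + 1) := by
  induction k with
  | zero =>
    rw [derivedSeries_zero, derivedSeries_one]
    intro x hx
    obtain ⟨y, _, rfl⟩ := hx
    exact y.2
  | succ k ih =>
    rw [derivedSeries_succ, derivedSeries_succ, Subgroup.map_commutator]
    exact Subgroup.commutator_mono ih ih

lemma derivedSeries_commutator_eq_bot (G : Type*) [Group G] (k : ℕ)
    (h : derivedSeries G (k + 1) = ⊥) : derivedSeries (↥(commutator G)) k = ⊥ := by
  have := derivedSeries_commutator_le G k
  rw [h, le_bot_iff, Subgroup.map_eq_bot_iff, Subgroup.ker_subtype, le_bot_iff] at this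
  exact this

universe u

set_option maxHeartbeats 1000000 in
lemma weight_step {G : Type u} [Group G] [TopologicalSpace G] [IsTopologicalGroup G]
    [PreconnectedSpace G] {m : ℕ}
    (A : G → Matrix (Fin m) (Fin m) ℂ)
    (hAmul : ∀ g h : G, A (g * h) = A g * A h) (hAone : A 1 = 1)
    (hAcont : Continuous A)
    (v0 : Fin m → ℂ) (hv00 : v0 ≠ 0)
    (hv0 : ∀ d : ↥(commutator G), ∃ c : ℂ, Matrix.mulVec (A ↑d) v0 = c • v0) :
    ∃ v : Fin m → ℂ, v ≠ 0 ∧ ∀ g : G, ∃ c : ℂ, Matrix.mulVec (A g) v = c • v := by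
  classical
  have hAinv : ∀ g : G, A g * A g⁻¹ = 1 := by
    intro g; rw [← hAmul, mul_inv_cancel, hAone]
  obtain ⟨i0, hi0⟩ := Function.ne_iff.mp hv00
  replace hi0 : v0 i0 ≠ 0 := hi0
  set χ : ↥(commutator G) → ℂ := fun d => Matrix.mulVec (A ↑d) v0 i0 / v0 i0 with hχdef
  have hχ : ∀ d : ↥(commutator G), Matrix.mulVec (A ↑d) v0 = χ d • v0 := by
    intro d
    obtain ⟨c, hc'⟩ := hv0 d
    have : χ d = c := by
      rw [hχdef]
      show Matrix.mulVec (A ↑d) v0 i0 / v0 i0 = c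
      rw [hc', Pi.smul_apply, smul_eq_mul, mul_div_assoc, div_self hi0, mul_one]
    rw [this]; exact hc'
  have hmem : ∀ (g x : G), x ∈ commutator G → g * x * g⁻¹ ∈ commutator G := by
    intro g x hx
    exact (Subgroup.commutator_normal ⊤ ⊤).conj_mem x hx g
  -- (A) conjugation invariance of χ
  have hconj : ∀ (d : ↥(commutator G)) (g : G),
      χ ⟨g * ↑d * g⁻¹, hmem g ↑d d.2⟩ = χ d := by
    intro d g
    set F : G → ℂ := fun g => χ ⟨g * ↑d * g⁻¹, hmem g ↑d d.2⟩ with hF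
    have hχconj : ∀ g : G, Matrix.mulVec (A (g * ↑d * g⁻¹)) v0 = F g • v0 := fun g =>
      hχ ⟨g * ↑d * g⁻¹, hmem g ↑d d.2⟩
    have hFcont : Continuous F := by
      have h1 : Continuous fun g : G => g * ↑d * g⁻¹ :=
        ((continuous_id.mul continuous_const).mul continuous_inv)
      have h2 : Continuous fun g : G => Matrix.mulVec (A (g * ↑d * g⁻¹)) v0 i0 := by
        have := ((hAcont.comp h1).matrix_mulVec (continuous_const (y := v0)))
        exact (continuous_apply i0).comp this
      exact h2.div_const _
    have hFval : ∀ g : G,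
        F g ∈ setOf (Module.End.HasEigenvalue (Matrix.mulVecLin (A ↑d))) := by
      intro g
      set u : Fin m → ℂ := Matrix.mulVec (A g⁻¹) v0 with hu
      have hu0 : u ≠ 0 := by
        intro h0
        apply hi0
        have : Matrix.mulVec (A g) u = v0 := by
          rw [hu, Matrix.mulVec_mulVec, hAinv g, Matrix.one_mulVec]
        rw [← this, h0, Matrix.mulVec_zero]
        rfl  
      have heig : Matrix.mulVec (A ↑d) u = F g • u := by
        rw [hu, Matrix.mulVec_mulVec, ← hAmul]
        have : (↑d : G) * g⁻¹ = g⁻¹ * (g * ↑d * g⁻¹) := by group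
        rw [this, hAmul, ← Matrix.mulVec_mulVec, hχconj g, Matrix.mulVec_smul]
      show Module.End.HasEigenvalue (Matrix.mulVecLin (A ↑d)) (F g)
      apply Module.End.hasEigenvalue_of_hasEigenvector (μ := F g) (x := u)
      exact ⟨Module.End.mem_eigenspace_iff.mpr (by simpa [Matrix.mulVecLin_apply] using heig), hu0⟩
    have hSfin : (setOf (Module.End.HasEigenvalue (Matrix.mulVecLin (A ↑d)))).Finite :=
      Module.End.finite_hasEigenvalue (Matrix.mulVecLin (A ↑d))
    have := const_of_finite hFcont hSfin hFval g 1
    have h1 : F 1 = χ d := by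
      have hsub : (⟨(1:G) * ↑d * (1:G)⁻¹, hmem 1 ↑d d.2⟩ : ↥(commutator G)) = d :=
        Subtype.ext (by group)
      show χ ⟨(1:G) * ↑d * (1:G)⁻¹, hmem 1 ↑d d.2⟩ = χ d
      rw [hsub]
    rw [← h1]; exact this
  -- (B) the weight space W
  set W : Submodule ℂ (Fin m → ℂ) :=
    { carrier := {v | ∀ d : ↥(commutator G), Matrix.mulVec (A ↑d) v = χ d • v}
      add_mem' := by
        intro a b ha hb d
        rw [Matrix.mulVec_add, ha d, hb d, smul_add]
      zero_mem' := by intro d; rw [Matrix.mulVec_zero, smul_zero]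
      smul_mem' := by
        intro c v hv d
        rw [Matrix.mulVec_smul, hv d, smul_comm] } with hW
  have hmemW : ∀ v : Fin m → ℂ, v ∈ W ↔
      ∀ d : ↥(commutator G), Matrix.mulVec (A ↑d) v = χ d • v := fun v => Iff.rfl
  have hv0W : v0 ∈ W := hχ
  have hWinv : ∀ g : G, ∀ v ∈ W, Matrix.mulVec (A g) v ∈ W := by
    intro g v hv
    rw [hmemW]
    intro d
    have hd' : g⁻¹ * ↑d * g ∈ commutator G := by
      have := hmem g⁻¹ ↑d d.2
      rwa [inv_inv] at this
    have key : χ ⟨g⁻¹ * ↑d * g, hd'⟩ = χ d := by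
      have hsub : (⟨g⁻¹ * ↑d * (g⁻¹)⁻¹, hmem g⁻¹ ↑d d.2⟩ : ↥(commutator G)) = ⟨g⁻¹ * ↑d * g, hd'⟩ :=
        Subtype.ext (by show g⁻¹ * ↑d * g⁻¹⁻¹ = g⁻¹ * ↑d * g; rw [inv_inv])
      rw [← hsub]
      exact hconj d g⁻¹
    have hrw : (↑d : G) * g = g * (g⁻¹ * ↑d * g) := by group
    rw [Matrix.mulVec_mulVec, ← hAmul, hrw, hAmul, ← Matrix.mulVec_mulVec,
      (hmemW v).mp hv ⟨g⁻¹ * ↑d * g, hd'⟩, Matrix.mulVec_smul, key]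
  -- (C) restrictions
  set L : G → Module.End ℂ ↥W := fun g => (Matrix.mulVecLin (A g)).restrict
    (p := W) (q := W) (fun v hv => by simpa [Matrix.mulVecLin_apply] using hWinv g v hv) with hL
  have hLval : ∀ (g : G) (w : ↥W), ((L g w : Fin m → ℂ)) = Matrix.mulVec (A g) ↑w := by
    intro g w
    rw [hL]
    simp [LinearMap.restrict_coe_apply, Matrix.mulVecLin_apply]
  have hLmul : ∀ g h : G, L (g * h) = L g * L h := by
    intro g h
    ext w
    rw [Module.End.mul_apply]
    have : ((L (g*h) w : Fin m → ℂ)) = ((L g (L h w) : Fin m → ℂ)) := by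
      rw [hLval, hLval, hLval, Matrix.mulVec_mulVec, hAmul]
    exact congrFun (congrArg _ (Subtype.ext this)) _
  have hLone : L 1 = 1 := by
    ext w
    have : ((L 1 w : Fin m → ℂ)) = (w : Fin m → ℂ) := by
      rw [hLval, hAone, Matrix.one_mulVec]
    exact congrFun (congrArg _ (Subtype.ext this)) _
  haveI : Nontrivial ↥W := nontrivial_of_ne ⟨v0, hv0W⟩ 0 (by
    intro h
    exact hv00 (by simpa using congrArg Subtype.val h))
  have hrpos : 0 < Module.finrank ℂ ↥W := Module.finrank_pos
  have hcommmem : ∀ a b : G, ⁅a, b⁆ ∈ commutator G := fun a b =>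
    Subgroup.commutator_mem_commutator (Subgroup.mem_top a) (Subgroup.mem_top b)
  have hLcommscalar : ∀ a b : G,
      L ⁅a, b⁆ = χ ⟨⁅a, b⁆, hcommmem a b⟩ • (1 : Module.End ℂ ↥W) := by
    intro a b
    ext w
    have h1 : ((L ⁅a,b⁆ w : Fin m → ℂ)) = χ ⟨⁅a, b⁆, hcommmem a b⟩ • (w : Fin m → ℂ) := by
      rw [hLval]
      exact w.2 ⟨⁅a,b⁆, hcommmem a b⟩
    have h2 : (L ⁅a,b⁆ w) = χ ⟨⁅a, b⁆, hcommmem a b⟩ • w := Subtype.ext (by simpa using h1)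
    rw [h2]
    rfl
  have hdet1 : ∀ a b : G, LinearMap.det (L ⁅a, b⁆) = 1 := by
    intro a b
    have hd : ∀ g : G, LinearMap.det (L g) * LinearMap.det (L g⁻¹) = 1 := by
      intro g
      rw [← LinearMap.det.map_mul, ← hLmul, mul_inv_cancel, hLone, LinearMap.det.map_one]
    have hsplit : LinearMap.det (L ⁅a,b⁆)
        = LinearMap.det (L a) * LinearMap.det (L b) * LinearMap.det (L a⁻¹) * LinearMap.det (L b⁻¹) := by
      rw [commutatorElement_def, hLmul, hLmul, hLmul, LinearMap.det.map_mul,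
        LinearMap.det.map_mul, LinearMap.det.map_mul]
    rw [hsplit]
    calc LinearMap.det (L a) * LinearMap.det (L b) * LinearMap.det (L a⁻¹) * LinearMap.det (L b⁻¹)
        = (LinearMap.det (L a) * LinearMap.det (L a⁻¹)) * (LinearMap.det (L b) * LinearMap.det (L b⁻¹)) := by ring
      _ = 1 := by rw [hd a, hd b, one_mul]
  have hroot : ∀ a b : G, (χ ⟨⁅a, b⁆, hcommmem a b⟩) ^ (Module.finrank ℂ ↥W) = 1 := by
    intro a b
    have h := hdet1 a b
    rw [hLcommscalar a b] at h
    rwa [LinearMap.det_smul, LinearMap.det.map_one, mul_one] at h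
  -- connectedness: χ of commutators is 1
  have hχcomm1 : ∀ a b : G, χ ⟨⁅a, b⁆, hcommmem a b⟩ = 1 := by
    intro a b
    set cmap : G × G → ℂ := fun p => χ ⟨⁅p.1, p.2⁆, hcommmem p.1 p.2⟩ with hcmap
    have hcont : Continuous cmap := by
      have h1 : Continuous fun p : G × G => ⁅p.1, p.2⁆ :=
        ((continuous_fst.mul continuous_snd).mul continuous_fst.inv).mul continuous_snd.inv
      have h2 : Continuous fun p : G × G => Matrix.mulVec (A ⁅p.1, p.2⁆) v0 i0 := by
        have := ((hAcont.comp h1).matrix_mulVec (continuous_const (y := v0)))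
        exact (continuous_apply i0).comp this
      exact h2.div_const _
    have hfin : ({z : ℂ | z ^ (Module.finrank ℂ ↥W) = 1}).Finite := by
      have hset : ({z : ℂ | z ^ (Module.finrank ℂ ↥W) = 1}) =
          {z : ℂ | Polynomial.IsRoot (Polynomial.X ^ (Module.finrank ℂ ↥W) - 1) z} := by
        ext z
        simp [Polynomial.IsRoot, sub_eq_zero]
      rw [hset]
      apply Polynomial.finite_setOf_isRoot
      intro h
      have := congrArg (Polynomial.eval 0) h
      simp [zero_pow hrpos.ne'] at this
    have hval : ∀ p : G × G, cmap p ∈ {z : ℂ | z ^ (Module.finrank ℂ ↥W) = 1} :=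
      fun p => hroot p.1 p.2
    have hcc := const_of_finite hcont hfin hval (a, b) (1, 1)
    rw [hcmap] at hcc
    simp only at hcc
    rw [hcc]
    have h11 : χ ⟨⁅(1:G), (1:G)⁆, hcommmem 1 1⟩ = χ ⟨1, (commutator G).one_mem⟩ := by
      have hsub : (⟨⁅(1:G), (1:G)⁆, hcommmem 1 1⟩ : ↥(commutator G)) = ⟨1, (commutator G).one_mem⟩ :=
        Subtype.ext (by group)
      rw [hsub]
    rw [h11, hχdef]
    show Matrix.mulVec (A ((⟨1, (commutator G).one_mem⟩ : ↥(commutator G)) : G)) v0 i0 / v0 i0 = 1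
    have hA1 : A ((⟨1, (commutator G).one_mem⟩ : ↥(commutator G)) : G) = 1 := hAone
    rw [hA1, Matrix.one_mulVec, div_self hi0]
  -- (D) the L g commute
  have hLcomm : ∀ a b : G, Commute (L a) (L b) := by
    intro a b
    have key : L (a * b) = L (b * a) := by
      ext w
      have hxy : a * b = ⁅a, b⁆ * (b * a) := by group
      have h3 : ((L (a*b) w : Fin m → ℂ)) = ((L (b*a) w : Fin m → ℂ)) := by
        rw [hLval, hLval, hxy, hAmul, ← Matrix.mulVec_mulVec]
        have hin : Matrix.mulVec (A (b * a)) ↑w ∈ W := hWinv (b*a) ↑w w.2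
        have h4 := (hmemW _).mp hin ⟨⁅a,b⁆, hcommmem a b⟩
        rw [h4, hχcomm1 a b, one_smul]
      exact congrFun (congrArg _ (Subtype.ext h3)) _
    unfold Commute SemiconjBy
    rw [← hLmul, ← hLmul, key]
  -- (E) common eigenvector of the commuting family
  obtain ⟨w, hw0, hw⟩ := commuting_common_eigenvector (Module.finrank ℂ ↥W) ↥W le_rfl
    (Set.range L) (by
      rintro f ⟨a, rfl⟩ g' ⟨b, rfl⟩
      exact hLcomm a b)
  refine ⟨(w : Fin m → ℂ), by simpa using hw0, ?_⟩
  intro g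
  obtain ⟨c, hc⟩ := hw (L g) ⟨g, rfl⟩
  refine ⟨c, ?_⟩
  have hval := congrArg Subtype.val hc
  rw [hLval] at hval
  simpa using hval

lemma connected_solvable_common_eigenvector (k : ℕ) :
    ∀ (G : Type u) [Group G] [TopologicalSpace G] [IsTopologicalGroup G]
    [PreconnectedSpace G], derivedSeries G k = ⊥ →
    ∀ (m : ℕ), 0 < m → ∀ (φ : G →* GL (Fin m) ℂ), Continuous φ →
    ∃ v : Fin m → ℂ, v ≠ 0 ∧ ∀ g : G,
      ∃ c : ℂ, Matrix.mulVec ((φ g : GL (Fin m) ℂ) : Matrix (Fin m) (Fin m) ℂ) v = c • v := by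
  induction k with
  | zero =>
    intro G _ _ _ _ hk m hm φ hφ
    refine ⟨fun _ => 1, ?_, ?_⟩
    · intro h
      have := congrFun h ⟨0, hm⟩
      simp at this
    · intro g
      have hg : g = 1 := by
        have h1 : g ∈ derivedSeries G 0 := by rw [derivedSeries_zero]; trivial
        rw [hk] at h1
        exact Subgroup.mem_bot.mp h1
      refine ⟨1, ?_⟩
      rw [hg, _root_.map_one]
      simp [Matrix.one_mulVec]
  | succ k ih =>
    intro G _ _ _ _ hk m hm φ hφ
    haveI : PreconnectedSpace ↥(commutator G) :=
      Subtype.preconnectedSpace isPreconnected_commutator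
    have hφD : Continuous ⇑(φ.comp (commutator G).subtype) := by
      simpa [MonoidHom.coe_comp] using hφ.comp continuous_subtype_val
    obtain ⟨v0, hv00, hv0⟩ := ih ↥(commutator G) (derivedSeries_commutator_eq_bot G k hk)
      m hm (φ.comp (commutator G).subtype) hφD
    exact weight_step (fun g => ((φ g : GL (Fin m) ℂ) : Matrix (Fin m) (Fin m) ℂ))
      (by intro g h; simp [_root_.map_mul]) (by simp)
      (Units.continuous_val.comp hφ) v0 hv00 hv0


/-- A finite-dimensional complex matrix representation is irreducible if the only
subspaces of `ℂ^m` invariant under all `ρ g` are `0` and the whole space. -/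
def MatIrreducible {G : Type*} [Group G] {m : ℕ} (ρ : G →* GL (Fin m) ℂ) : Prop :=
  ∀ W : Submodule ℂ (Fin m → ℂ),
    (∀ g : G, ∀ v ∈ W, Matrix.mulVec ((ρ g : GL (Fin m) ℂ) : Matrix (Fin m) (Fin m) ℂ) v ∈ W) →
    W = ⊥ ∨ W = ⊤

private lemma matrix_eq_of_mulVec {m : ℕ} (M N : Matrix (Fin m) (Fin m) ℂ)
    (h : ∀ x : Fin m → ℂ, Matrix.mulVec M x = Matrix.mulVec N x) : M = N := by
  ext i j
  have := congrFun (h (Pi.single j 1)) i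
  rw [Matrix.mulVec_single, Matrix.mulVec_single] at this
  simpa using this


theorem stmt4 (n : ℕ) (H : Subgroup (GL (Fin n) ℝ)) (hH : IsClosed (H : Set (GL (Fin n) ℝ)))
    (hconn : IsConnected (H : Set (GL (Fin n) ℝ))) (hsolv : IsSolvable ↥H)
    (hsep : ∀ g : ↥H, g ≠ 1 → ∃ (m : ℕ) (ρ : ↥H →* GL (Fin m) ℂ),
        Continuous ρ ∧ MatIrreducible ρ ∧ ρ g ≠ 1) :
    ∀ a b : ↥H, a * b = b * a := by
  intro a b
  by_contra hab
  have hne : a * b * (b * a)⁻¹ ≠ 1 := by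
    intro h
    exact hab (mul_inv_eq_one.mp h)
  obtain ⟨m, ρ, hcont, hirr, hρg⟩ := hsep _ hne
  rcases Nat.eq_zero_or_pos m with hm | hm
  · subst hm
    haveI : Subsingleton (Matrix (Fin 0) (Fin 0) ℂ) :=
      ⟨fun M N => by ext i; exact i.elim0⟩
    haveI : Subsingleton (GL (Fin 0) ℂ) :=
      ⟨fun u v => Units.ext (Subsingleton.elim _ _)⟩
    exact hρg (Subsingleton.elim _ _)
  · haveI : PreconnectedSpace ↥H := Subtype.preconnectedSpace hconn.isPreconnected
    obtain ⟨K, hK⟩ := hsolv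
    obtain ⟨v, hv0, hv⟩ := connected_solvable_common_eigenvector K ↥H hK m hm ρ hcont
    set Wv : Submodule ℂ (Fin m → ℂ) := Submodule.span ℂ {v} with hWv
    have hWvinv : ∀ g : ↥H, ∀ x ∈ Wv,
        Matrix.mulVec ((ρ g : GL (Fin m) ℂ) : Matrix (Fin m) (Fin m) ℂ) x ∈ Wv := by
      intro g x hx
      obtain ⟨c', hc'⟩ := Submodule.mem_span_singleton.mp hx
      obtain ⟨c, hc⟩ := hv g
      rw [← hc', Matrix.mulVec_smul, hc]
      exact Submodule.smul_mem _ _ (Submodule.smul_mem _ _ (Submodule.mem_span_singleton_self v))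
    have hWvtop : Wv = ⊤ := by
      rcases hirr Wv hWvinv with h | h
      · exfalso
        apply hv0
        have : v ∈ Wv := Submodule.mem_span_singleton_self v
        rw [h] at this
        exact Submodule.mem_bot ℂ |>.mp this
      · exact h
    -- every ρ g acts as a scalar
    have hscal : ∀ g : ↥H, ∃ c : ℂ, ∀ x : Fin m → ℂ,
        Matrix.mulVec ((ρ g : GL (Fin m) ℂ) : Matrix (Fin m) (Fin m) ℂ) x = c • x := by
      intro g
      obtain ⟨c, hc⟩ := hv g
      refine ⟨c, fun x => ?_⟩
      have hx : x ∈ Wv := hWvtop ▸ Submodule.mem_top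
      obtain ⟨c', hc'⟩ := Submodule.mem_span_singleton.mp hx
      rw [← hc', Matrix.mulVec_smul, hc, smul_comm]
    have hcommmat : ∀ g h : ↥H, ρ g * ρ h = ρ h * ρ g := by
      intro g h
      obtain ⟨cg, hcg⟩ := hscal g
      obtain ⟨ch, hch⟩ := hscal h
      apply Units.ext
      show ((ρ g : GL (Fin m) ℂ) : Matrix (Fin m) (Fin m) ℂ) * ((ρ h : GL (Fin m) ℂ) : Matrix (Fin m) (Fin m) ℂ)
        = ((ρ h : GL (Fin m) ℂ) : Matrix (Fin m) (Fin m) ℂ) * ((ρ g : GL (Fin m) ℂ) : Matrix (Fin m) (Fin m) ℂ)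
      apply matrix_eq_of_mulVec
      intro x
      rw [← Matrix.mulVec_mulVec, ← Matrix.mulVec_mulVec, hcg, hch, hcg, hch, smul_comm]
    apply hρg
    have : ρ (a * b) = ρ (b * a) := by
      rw [_root_.map_mul, _root_.map_mul, hcommmat]
    rw [_root_.map_mul, map_inv, this]
    group
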